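/- arXiv:1401.8175 — 3 statements merged into one kernel-verified Lean document; each statement's English description precedes it below -/
import Mathlib

section
/- For a uniform binary AND-OR tree of even height h = 2k under any independent distribution d in which the root has value 0 with probability 0 or 1 (i.e., the root's value is deterministic), the minimum over deterministic alpha-beta algorithms of the expected cost equals 2^k. -/
/-- Value of the uniform binary tree of height `n` with alternating gates and root gate `g`
(`true` = AND, `false` = OR), under leaf assignment `f`. Leaves are indexed by root-to-leaf
paths `Fin n → Bool`; `true` = value 1, `false` = value 0. -/
def aoval : (n : ℕ) → Bool → ((Fin n → Bool) → Bool) → Bool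
  | 0, _, f => f (fun i => i.elim0)
  | n + 1, g, f =>
      let l := aoval n (!g) (fun v => f (Fin.cons false v))
      let r := aoval n (!g) (fun v => f (Fin.cons true v))
      if g then l && r else l || r

/-- Deterministic (adaptive) leaf-querying algorithms, as decision trees:
`query q t0 t1` probes leaf `q` and continues with `t0` if it has value 0, `t1` if value 1. -/
inductive DTree (n : ℕ) : Type
  | ans (b : Bool) : DTree n
  | query (q : Fin n → Bool) (t0 t1 : DTree n) : DTree n

/-- Output of a decision tree on an assignment. -/
def DTree.run {n : ℕ} : DTree n → ((Fin n → Bool) → Bool) → Bool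
  | .ans b, _ => b
  | .query q t0 t1, f => if f q then t1.run f else t0.run f

/-- Number of leaves probed by a decision tree on an assignment. -/
def DTree.cost {n : ℕ} : DTree n → ((Fin n → Bool) → Bool) → ℕ
  | .ans _, _ => 0
  | .query q t0 t1, f => 1 + (if f q then t1.cost f else t0.cost f)

/-- A deterministic alpha-beta algorithm must compute the root value on every assignment. -/
def DTree.correct {n : ℕ} (t : DTree n) (g : Bool) : Prop :=
  ∀ f, t.run f = aoval n g f

/-- Probability of leaf assignment `f` under the independent distribution in which leaf `q`
has value 0 with probability `σ q`. -/
noncomputable def wt {n : ℕ} (σ : (Fin n → Bool) → ℝ) (f : (Fin n → Bool) → Bool) : ℝ :=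
  ∏ q : Fin n → Bool, (if f q then 1 - σ q else σ q)

/-- Expected number of leaves probed by the algorithm `t` under the independent
distribution `σ`. -/
noncomputable def eCost {n : ℕ} (t : DTree n) (σ : (Fin n → Bool) → ℝ) : ℝ :=
  ∑ f : (Fin n → Bool) → Bool, wt σ f * (t.cost f : ℝ)

/-- Probability that the root (gate `g`) has value 0 under the independent distribution `σ`. -/
noncomputable def rootProb {n : ℕ} (g : Bool) (σ : (Fin n → Bool) → ℝ) : ℝ :=
  ∑ f : (Fin n → Bool) → Bool, (if aoval n g f = false then wt σ f else 0)

/-- `σ` is an independent distribution: each leaf probability lies in `[0,1]`. -/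
def validID {n : ℕ} (σ : (Fin n → Bool) → ℝ) : Prop := ∀ q, 0 ≤ σ q ∧ σ q ≤ 1

/-- Minimum, over deterministic alpha-beta algorithms, of the expected cost under `σ`. -/
noncomputable def minCost {n : ℕ} (g : Bool) (σ : (Fin n → Bool) → ℝ) : ℝ :=
  sInf {c : ℝ | ∃ t : DTree n, t.correct g ∧ c = eCost t σ}

section AB
open Finset

variable {n : ℕ}

lemma ABneq : ∀ x y : Bool, x ≠ y → x = !y := by decide
lemma ABneq2 : ∀ y : Bool, (!y) ≠ y := by decide

/-- restriction to the child `s`. -/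
def ABsub {α : Type*} (s : Bool) (f : (Fin (n+1) → Bool) → α) : (Fin n → Bool) → α :=
  fun v => f (Fin.cons s v)

def ABglue (a b : (Fin n → Bool) → Bool) : (Fin (n+1) → Bool) → Bool :=
  fun q => if q 0 then b (Fin.tail q) else a (Fin.tail q)

@[simp] lemma ABsub_false_glue (a b : (Fin n → Bool) → Bool) : ABsub false (ABglue a b) = a := by
  funext v; simp [ABsub, ABglue]

@[simp] lemma ABsub_true_glue (a b : (Fin n → Bool) → Bool) : ABsub true (ABglue a b) = b := by
  funext v; simp [ABsub, ABglue]

def ABasgEquiv (n : ℕ) :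
    (((Fin n → Bool) → Bool) × ((Fin n → Bool) → Bool)) ≃ ((Fin (n+1) → Bool) → Bool) where
  toFun p := ABglue p.1 p.2
  invFun f := (ABsub false f, ABsub true f)
  left_inv p := by simp
  right_inv f := by
    funext q
    have hq : Fin.cons (q 0) (Fin.tail q) = q := Fin.cons_self_tail q
    show (if q 0 then f (Fin.cons true (Fin.tail q)) else f (Fin.cons false (Fin.tail q))) = f q
    cases h : q 0 <;> (conv_rhs => rw [← hq]) <;> rw [h] <;> simp

lemma ABsum_split (F : ((Fin (n+1) → Bool) → Bool) → ℝ) :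
    ∑ f : (Fin (n+1) → Bool) → Bool, F f
      = ∑ a : (Fin n → Bool) → Bool, ∑ b : (Fin n → Bool) → Bool, F (ABglue a b) := by
  rw [← Equiv.sum_comp (ABasgEquiv n) F, Fintype.sum_prod_type]
  rfl

def ABpathEquiv (n : ℕ) : (Bool × (Fin n → Bool)) ≃ (Fin (n+1) → Bool) where
  toFun p := Fin.cons p.1 p.2
  invFun q := (q 0, Fin.tail q)
  left_inv p := by simp
  right_inv q := Fin.cons_self_tail q

lemma ABwt_split (σ : (Fin (n+1) → Bool) → ℝ) (f : (Fin (n+1) → Bool) → Bool) :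
    wt σ f = wt (ABsub false σ) (ABsub false f) * wt (ABsub true σ) (ABsub true f) := by
  unfold wt
  rw [← Equiv.prod_comp (ABpathEquiv n) (fun q => if f q then 1 - σ q else σ q),
    Fintype.prod_prod_type, Fintype.prod_bool, mul_comm]
  rfl

lemma ABsum_wt {m : ℕ} (σ : (Fin m → Bool) → ℝ) : ∑ f : (Fin m → Bool) → Bool, wt σ f = 1 := by
  unfold wt
  have h := Finset.prod_univ_sum (fun _ : (Fin m → Bool) => (univ : Finset Bool))
    (fun q b => if b then 1 - σ q else σ q)
  rw [Fintype.piFinset_univ] at h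
  rw [← h]
  have : ∀ q : Fin m → Bool, (∑ b : Bool, if b then 1 - σ q else σ q) = 1 := by
    intro q; rw [Fintype.sum_bool]; simp
  rw [Finset.prod_congr rfl (fun q _ => this q)]
  simp

lemma ABwt_nonneg {m : ℕ} {σ : (Fin m → Bool) → ℝ} (hσ : validID σ) (f : (Fin m → Bool) → Bool) :
    0 ≤ wt σ f := by
  refine Finset.prod_nonneg fun q _ => ?_
  rcases hσ q with ⟨h1, h2⟩
  by_cases h : f q <;> simp [h] <;> linarith

def bop (g x y : Bool) : Bool := if g then x && y else x || y

lemma aoval_succ (g : Bool) (f : (Fin (n+1) → Bool) → Bool) :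
    aoval (n+1) g f = bop g (aoval n (!g) (ABsub false f)) (aoval n (!g) (ABsub true f)) := rfl

lemma bop_absorb (g y : Bool) : bop g (!g) y = !g := by cases g <;> simp [bop]
lemma bop_id (g y : Bool) : bop g g y = y := by cases g <;> simp [bop]
lemma bop_comm (g x y : Bool) : bop g x y = bop g y x := by
  cases g <;> simp [bop, Bool.and_comm, Bool.or_comm]

lemma aoval_succ' (s g : Bool) (f : (Fin (n+1) → Bool) → Bool) :
    aoval (n+1) g f = bop g (aoval n (!g) (ABsub s f)) (aoval n (!g) (ABsub (!s) f)) := by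
  cases s
  · exact aoval_succ g f
  · rw [aoval_succ g f, bop_comm]
    rfl

def certSize : ℕ → Bool → Bool → ℕ
  | 0, _, _ => 1
  | n+1, g, b => (if g = b then 2 else 1) * certSize n (!g) b

lemma certSize_even (k : ℕ) (g b : Bool) : certSize (2*k) g b = 2^k := by
  induction k generalizing g b with
  | zero => rfl
  | succ k ih =>
    have h2 : 2*(k+1) = (2*k) + 1 + 1 := by ring
    rw [h2]
    show (if g = b then 2 else 1) * ((if (!g) = b then 2 else 1) * certSize (2*k) (!!g) b) = 2^(k+1)
    rw [Bool.not_not, ih]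
    cases g <;> cases b <;> simp [pow_succ] <;> ring

def graft (s : Bool) : DTree n → (Bool → DTree (n+1)) → DTree (n+1)
  | .ans b, k => k b
  | .query q t0 t1, k => .query (Fin.cons s q) (graft s t0 k) (graft s t1 k)

lemma run_graft (s : Bool) (t : DTree n) (k : Bool → DTree (n+1)) (f : (Fin (n+1) → Bool) → Bool) :
    (graft s t k).run f = (k (t.run (ABsub s f))).run f := by
  induction t with
  | ans b => rfl
  | query q t0 t1 ih0 ih1 =>
    show (DTree.query (Fin.cons s q) (graft s t0 k) (graft s t1 k)).run f = _
    have hq : f (Fin.cons s q) = ABsub s f q := rfl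
    simp only [DTree.run, hq]
    by_cases h : ABsub s f q <;> simp [h, ih0, ih1]

lemma cost_graft (s : Bool) (t : DTree n) (k : Bool → DTree (n+1)) (f : (Fin (n+1) → Bool) → Bool) :
    (graft s t k).cost f = t.cost (ABsub s f) + (k (t.run (ABsub s f))).cost f := by
  induction t with
  | ans b => simp [graft, DTree.cost, DTree.run]
  | query q t0 t1 ih0 ih1 =>
    show (DTree.query (Fin.cons s q) (graft s t0 k) (graft s t1 k)).cost f = _
    have hq : f (Fin.cons s q) = ABsub s f q := rfl
    simp only [DTree.cost, DTree.run, hq]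
    by_cases h : ABsub s f q <;> simp [h, ih0, ih1] <;> omega

def anyT : (n : ℕ) → Bool → DTree n
  | 0, _ => .query (fun i => i.elim0) (.ans false) (.ans true)
  | n+1, g => graft false (anyT n (!g)) (fun vl =>
      graft true (anyT n (!g)) (fun vr => .ans (bop g vl vr)))

lemma anyT_correct : ∀ (n : ℕ) (g : Bool), (anyT n g).correct g
  | 0, g => by
    intro f
    show (if f (fun i => i.elim0) then DTree.run (.ans true) f else DTree.run (.ans false) f)
        = f (fun i => i.elim0)
    by_cases h : f (fun i => i.elim0) <;> simp [h, DTree.run]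
  | n+1, g => by
    intro f
    show (graft false (anyT n (!g)) _).run f = _
    rw [run_graft, run_graft, anyT_correct n (!g), anyT_correct n (!g)]
    rfl

def ccTree (s g : Bool) (t1 t2 : DTree n) : DTree (n+1) :=
  graft s t1 (fun v1 => if v1 = !g then .ans (!g) else graft (!s) t2 (fun v2 => .ans v2))

lemma ccTree_correct (s g : Bool) {t1 t2 : DTree n} (h1 : t1.correct (!g))
    (h2 : t2.correct (!g)) : (ccTree s g t1 t2).correct g := by
  intro f
  rw [ccTree, run_graft, h1]
  by_cases hv : aoval n (!g) (ABsub s f) = !g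
  · rw [if_pos hv, aoval_succ' s g f, hv, bop_absorb]
    rfl
  · have hv' : aoval n (!g) (ABsub s f) = g := by
      rw [ABneq _ _ hv, Bool.not_not]
    rw [if_neg hv, run_graft, h2, aoval_succ' s g f, hv', bop_id]
    rfl

lemma ccTree_cost (s g : Bool) {t1 : DTree n} (t2 : DTree n) (h1 : t1.correct (!g))
    (f : (Fin (n+1) → Bool) → Bool) :
    (ccTree s g t1 t2).cost f = t1.cost (ABsub s f) +
      (if aoval n (!g) (ABsub s f) = !g then 0 else t2.cost (ABsub (!s) f)) := by
  rw [ccTree, cost_graft, h1]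
  by_cases hv : aoval n (!g) (ABsub s f) = !g
  · rw [if_pos hv, if_pos hv]
    rfl
  · rw [if_neg hv, if_neg hv, cost_graft]
    show _ + (t2.cost (ABsub (!s) f) + (DTree.ans _).cost f) = _
    show _ + (t2.cost (ABsub (!s) f) + 0) = _
    omega

lemma double_sum_factor {α β : Type*} [Fintype α] [Fintype β] (A B : α → ℝ) (C D : β → ℝ) :
    ∑ a : α, ∑ c : β, (A a * C c + B a * D c)
      = (∑ a : α, A a) * (∑ c : β, C c) + (∑ a : α, B a) * (∑ c : β, D c) := by
  simp only [Finset.sum_add_distrib, ← Finset.mul_sum, ← Finset.sum_mul]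

lemma eCost_ccTree (s g : Bool) {t1 : DTree n} (t2 : DTree n) (h1 : t1.correct (!g))
    (σ : (Fin (n+1) → Bool) → ℝ) :
    eCost (ccTree s g t1 t2) σ =
      eCost t1 (ABsub s σ) +
      (∑ a : (Fin n → Bool) → Bool, wt (ABsub s σ) a * (if aoval n (!g) a = (!g) then 0 else 1))
        * eCost t2 (ABsub (!s) σ) := by
  have hwt : ∀ a c, wt σ (ABglue a c) = wt (ABsub false σ) a * wt (ABsub true σ) c := by
    intro a c; rw [ABwt_split]; simp
  unfold eCost
  rw [ABsum_split]
  cases s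
  · have key : ∀ a c, wt σ (ABglue a c) * ((ccTree false g t1 t2).cost (ABglue a c) : ℝ)
        = (wt (ABsub false σ) a * (t1.cost a : ℝ)) * wt (ABsub true σ) c
          + (wt (ABsub false σ) a * (if aoval n (!g) a = (!g) then 0 else 1))
            * (wt (ABsub true σ) c * (t2.cost c : ℝ)) := by
      intro a c
      rw [ccTree_cost false g t2 h1, hwt]
      simp only [ABsub_false_glue, ABsub_true_glue, Bool.not_false]
      by_cases hv : aoval n (!g) a = !g <;> simp [hv] <;> ring
    calc ∑ a : (Fin n → Bool) → Bool, ∑ c : (Fin n → Bool) → Bool,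
          wt σ (ABglue a c) * ((ccTree false g t1 t2).cost (ABglue a c) : ℝ)
        = ∑ a : (Fin n → Bool) → Bool, ∑ c : (Fin n → Bool) → Bool,
            ((wt (ABsub false σ) a * (t1.cost a : ℝ)) * wt (ABsub true σ) c
          + (wt (ABsub false σ) a * (if aoval n (!g) a = (!g) then 0 else 1))
            * (wt (ABsub true σ) c * (t2.cost c : ℝ))) :=
          Finset.sum_congr rfl fun a _ => Finset.sum_congr rfl fun c _ => key a c
      _ = (∑ a : (Fin n → Bool) → Bool, wt (ABsub false σ) a * (t1.cost a : ℝ))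
            * (∑ c : (Fin n → Bool) → Bool, wt (ABsub true σ) c)
          + (∑ a : (Fin n → Bool) → Bool,
              wt (ABsub false σ) a * (if aoval n (!g) a = (!g) then 0 else 1))
            * (∑ c : (Fin n → Bool) → Bool, wt (ABsub true σ) c * (t2.cost c : ℝ)) :=
          double_sum_factor _ _ _ _
      _ = _ := by rw [ABsum_wt, mul_one]; rfl
  · have key : ∀ a c, wt σ (ABglue a c) * ((ccTree true g t1 t2).cost (ABglue a c) : ℝ)
        = wt (ABsub false σ) a * (wt (ABsub true σ) c * (t1.cost c : ℝ))
          + (wt (ABsub false σ) a * (t2.cost a : ℝ))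
            * (wt (ABsub true σ) c * (if aoval n (!g) c = (!g) then 0 else 1)) := by
      intro a c
      rw [ccTree_cost true g t2 h1, hwt]
      simp only [ABsub_false_glue, ABsub_true_glue, Bool.not_true]
      by_cases hv : aoval n (!g) c = !g <;> simp [hv] <;> ring
    calc ∑ a : (Fin n → Bool) → Bool, ∑ c : (Fin n → Bool) → Bool,
          wt σ (ABglue a c) * ((ccTree true g t1 t2).cost (ABglue a c) : ℝ)
        = ∑ a : (Fin n → Bool) → Bool, ∑ c : (Fin n → Bool) → Bool,
            (wt (ABsub false σ) a * (wt (ABsub true σ) c * (t1.cost c : ℝ))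
          + (wt (ABsub false σ) a * (t2.cost a : ℝ))
            * (wt (ABsub true σ) c * (if aoval n (!g) c = (!g) then 0 else 1))) :=
          Finset.sum_congr rfl fun a _ => Finset.sum_congr rfl fun c _ => key a c
      _ = (∑ a : (Fin n → Bool) → Bool, wt (ABsub false σ) a)
            * (∑ c : (Fin n → Bool) → Bool, wt (ABsub true σ) c * (t1.cost c : ℝ))
          + (∑ a : (Fin n → Bool) → Bool, wt (ABsub false σ) a * (t2.cost a : ℝ))
            * (∑ c : (Fin n → Bool) → Bool,
                wt (ABsub true σ) c * (if aoval n (!g) c = (!g) then 0 else 1)) :=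
          double_sum_factor _ _ _ _
      _ = _ := by
          rw [ABsum_wt, one_mul]
          show eCost t1 (ABsub true σ) + eCost t2 (ABsub false σ) * _ = _
          rw [mul_comm (eCost t2 (ABsub false σ))]
          rfl

end AB

section AB2
open Finset

lemma exists_opt : ∀ (n : ℕ) (g b : Bool) (σ : (Fin n → Bool) → ℝ),
    (∀ f, aoval n g f ≠ b → wt σ f = 0) →
    ∃ t : DTree n, t.correct g ∧ eCost t σ = (certSize n g b : ℝ) := by
  intro n
  induction n with
  | zero =>
    intro g b σ h
    refine ⟨.query (fun i => i.elim0) (.ans false) (.ans true), ?_, ?_⟩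
    · intro f
      show (if f (fun i => i.elim0) then DTree.run (.ans true) f else DTree.run (.ans false) f)
          = f (fun i => i.elim0)
      by_cases hf : f (fun i => i.elim0) <;> simp [hf, DTree.run]
    · have hc : ∀ f : (Fin 0 → Bool) → Bool,
          ((DTree.query (fun i : Fin 0 => i.elim0) (.ans false) (.ans true)).cost f : ℝ) = 1 := by
        intro f; by_cases hf : f (fun i => i.elim0) <;> simp [DTree.cost, hf]
      show ∑ f : (Fin 0 → Bool) → Bool, wt σ f * _ = _
      calc ∑ f : (Fin 0 → Bool) → Bool, wt σ f
            * ((DTree.query (fun i : Fin 0 => i.elim0) (.ans false) (.ans true)).cost f : ℝ)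
          = ∑ f : (Fin 0 → Bool) → Bool, wt σ f :=
            Finset.sum_congr rfl fun f _ => by rw [hc f, mul_one]
        _ = 1 := ABsum_wt σ
        _ = (certSize 0 g b : ℝ) := by norm_num [certSize]
  | succ n ih =>
    intro g b σ h
    have hwt : ∀ a c, wt σ (ABglue a c) = wt (ABsub false σ) a * wt (ABsub true σ) c := by
      intro a c; rw [ABwt_split]; simp
    have hval : ∀ a c, aoval (n+1) g (ABglue a c)
        = bop g (aoval n (!g) a) (aoval n (!g) c) := by
      intro a c; rw [aoval_succ]; simp
    by_cases hgb : g = b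
    · subst hgb
      have hchildF : ∀ a, aoval n (!g) a ≠ g → wt (ABsub false σ) a = 0 := by
        intro a ha
        have key : ∀ c, wt (ABsub false σ) a * wt (ABsub true σ) c = 0 := by
          intro c
          rw [← hwt]
          apply h
          rw [hval, ABneq _ _ ha, bop_absorb]
          exact ABneq2 g
        calc wt (ABsub false σ) a
            = wt (ABsub false σ) a * ∑ c : (Fin n → Bool) → Bool, wt (ABsub true σ) c := by
              rw [ABsum_wt, mul_one]
          _ = ∑ c : (Fin n → Bool) → Bool, wt (ABsub false σ) a * wt (ABsub true σ) c :=
              Finset.mul_sum _ _ _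
          _ = 0 := by simp [key]
      have hchildT : ∀ a, aoval n (!g) a ≠ g → wt (ABsub true σ) a = 0 := by
        intro a ha
        have key : ∀ c, wt (ABsub false σ) c * wt (ABsub true σ) a = 0 := by
          intro c
          rw [← hwt]
          apply h
          rw [hval, ABneq _ _ ha, bop_comm, bop_absorb]
          exact ABneq2 g
        calc wt (ABsub true σ) a
            = (∑ c : (Fin n → Bool) → Bool, wt (ABsub false σ) c) * wt (ABsub true σ) a := by
              rw [ABsum_wt, one_mul]
          _ = ∑ c : (Fin n → Bool) → Bool, wt (ABsub false σ) c * wt (ABsub true σ) a :=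
              Finset.sum_mul _ _ _
          _ = 0 := by simp [key]
      obtain ⟨t1, h1c, h1e⟩ := ih (!g) g (ABsub false σ) hchildF
      obtain ⟨t2, h2c, h2e⟩ := ih (!g) g (ABsub true σ) hchildT
      refine ⟨ccTree false g t1 t2, ccTree_correct false g h1c h2c, ?_⟩
      rw [eCost_ccTree false g t2 h1c σ]
      have hind : ∑ a : (Fin n → Bool) → Bool,
          wt (ABsub false σ) a * (if aoval n (!g) a = (!g) then 0 else 1) = 1 := by
        have he : ∀ a : (Fin n → Bool) → Bool,
            wt (ABsub false σ) a * (if aoval n (!g) a = (!g) then 0 else 1)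
              = wt (ABsub false σ) a := by
          intro a
          by_cases hv : aoval n (!g) a = !g
          · rw [if_pos hv, mul_zero, hchildF a (by rw [hv]; exact ABneq2 g)]
          · rw [if_neg hv, mul_one]
        rw [Finset.sum_congr rfl (fun a _ => he a), ABsum_wt]
      rw [hind, one_mul, h1e]
      rw [show eCost t2 (ABsub (!false) σ) = eCost t2 (ABsub true σ) from rfl, h2e]
      rw [show certSize (n+1) g g = 2 * certSize n (!g) g from by simp [certSize]]
      push_cast
      ring
    · have hb : b = !g := by cases g <;> cases b <;> simp_all
      subst hb
      have hs : (∀ a, aoval n (!g) a ≠ (!g) → wt (ABsub false σ) a = 0) ∨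
                (∀ a, aoval n (!g) a ≠ (!g) → wt (ABsub true σ) a = 0) := by
        by_contra hcon
        push_neg at hcon
        obtain ⟨⟨aL, hL1, hL2⟩, ⟨aR, hR1, hR2⟩⟩ := hcon
        have h0 : wt σ (ABglue aL aR) = 0 := by
          apply h
          rw [hval, ABneq _ _ hL1, ABneq _ _ hR1, Bool.not_not, bop_id]
          exact Ne.symm (ABneq2 g)
        rw [hwt] at h0
        rcases mul_eq_zero.mp h0 with h0 | h0
        · exact hL2 h0
        · exact hR2 h0
      have hcs : (certSize (n+1) g (!g) : ℝ) = (certSize n (!g) (!g) : ℝ) := by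
        cases g <;> simp [certSize]
      rcases hs with hs | hs
      · obtain ⟨t1, h1c, h1e⟩ := ih (!g) (!g) (ABsub false σ) hs
        refine ⟨ccTree false g t1 (anyT n (!g)),
          ccTree_correct false g h1c (anyT_correct n (!g)), ?_⟩
        rw [eCost_ccTree false g _ h1c σ]
        have hind : ∑ a : (Fin n → Bool) → Bool,
            wt (ABsub false σ) a * (if aoval n (!g) a = (!g) then 0 else 1) = 0 := by
          apply Finset.sum_eq_zero
          intro a _
          by_cases hv : aoval n (!g) a = !g
          · rw [if_pos hv, mul_zero]
          · rw [hs a hv, zero_mul]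
        rw [hind, zero_mul, add_zero, h1e, hcs]
      · obtain ⟨t1, h1c, h1e⟩ := ih (!g) (!g) (ABsub true σ) hs
        refine ⟨ccTree true g t1 (anyT n (!g)),
          ccTree_correct true g h1c (anyT_correct n (!g)), ?_⟩
        rw [eCost_ccTree true g _ h1c σ]
        have hind : ∑ a : (Fin n → Bool) → Bool,
            wt (ABsub true σ) a * (if aoval n (!g) a = (!g) then 0 else 1) = 0 := by
          apply Finset.sum_eq_zero
          intro a _
          by_cases hv : aoval n (!g) a = !g
          · rw [if_pos hv, mul_zero]
          · rw [hs a hv, zero_mul]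
        rw [hind, zero_mul, add_zero, h1e, hcs]

def probes {n : ℕ} : DTree n → ((Fin n → Bool) → Bool) → Finset (Fin n → Bool)
  | .ans _, _ => ∅
  | .query q t0 t1, f => insert q (if f q then probes t1 f else probes t0 f)

lemma probes_card_le {n : ℕ} (t : DTree n) (f : (Fin n → Bool) → Bool) :
    (probes t f).card ≤ t.cost f := by
  induction t with
  | ans b => simp [probes, DTree.cost]
  | query q t0 t1 ih0 ih1 =>
    show (insert q (if f q then probes t1 f else probes t0 f)).card
        ≤ 1 + (if f q then t1.cost f else t0.cost f)
    by_cases hf : f q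
    · rw [if_pos hf, if_pos hf]
      exact le_trans (Finset.card_insert_le _ _) (by omega)
    · rw [if_neg hf, if_neg hf]
      exact le_trans (Finset.card_insert_le _ _) (by omega)

lemma probes_agree {n : ℕ} (t : DTree n) (f f' : (Fin n → Bool) → Bool)
    (hag : ∀ q ∈ probes t f, f' q = f q) :
    t.run f' = t.run f ∧ probes t f' = probes t f := by
  induction t with
  | ans b => exact ⟨rfl, rfl⟩
  | query q t0 t1 ih0 ih1 =>
    have hq : f' q = f q := hag q (by simp [probes])
    by_cases hf : f q
    · obtain ⟨hr, hp⟩ := ih1 (fun r hr => hag r (by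
        show r ∈ insert q (if f q then probes t1 f else probes t0 f)
        rw [if_pos hf]
        exact Finset.mem_insert_of_mem hr))
      constructor <;> simp [DTree.run, probes, hq, hf, hr, hp]
    · obtain ⟨hr, hp⟩ := ih0 (fun r hr => hag r (by
        show r ∈ insert q (if f q then probes t1 f else probes t0 f)
        rw [if_neg hf]
        exact Finset.mem_insert_of_mem hr))
      constructor <;> simp [DTree.run, probes, hq, hf, hr, hp]

lemma certBound : ∀ (n : ℕ) (g : Bool) (f : (Fin n → Bool) → Bool) (S : Finset (Fin n → Bool)),
    (∀ f', (∀ q ∈ S, f' q = f q) → aoval n g f' = aoval n g f) →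
    certSize n g (aoval n g f) ≤ S.card := by
  intro n
  induction n with
  | zero =>
    intro g f S hC
    show 1 ≤ S.card
    rcases Finset.eq_empty_or_nonempty S with rfl | hne
    · exfalso
      have h1 := hC (fun _ => !(f (fun i => i.elim0))) (by simp)
      exact ABneq2 _ h1
    · have := Finset.card_pos.mpr hne
      omega
  | succ n ih =>
    intro g f S hC
    set SL := (S.filter fun q => q 0 = false).image Fin.tail with hSLdef
    set SR := (S.filter fun q => q 0 = true).image Fin.tail with hSRdef
    have hcards : SL.card + SR.card ≤ S.card := by
      have h1 : SL.card ≤ (S.filter fun q => q 0 = false).card := Finset.card_image_le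
      have h2 : SR.card ≤ (S.filter fun q => q 0 = true).card := Finset.card_image_le
      have h3 : (S.filter fun q => q 0 = false).card
          + (S.filter fun q => q 0 = true).card = S.card := by
        rw [← Finset.card_union_of_disjoint]
        · congr 1
          ext q
          simp only [Finset.mem_union, Finset.mem_filter]
          cases h : q 0 <;> simp [h]
        · rw [Finset.disjoint_left]
          intro q hq hq'
          simp only [Finset.mem_filter] at hq hq'
          rw [hq.2] at hq'
          exact absurd hq'.2 (by decide)
      linarith
    have hglue : ∀ aL aR, (∀ v ∈ SL, aL v = ABsub false f v) → (∀ v ∈ SR, aR v = ABsub true f v) →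
        (∀ q ∈ S, ABglue aL aR q = f q) := by
      intro aL aR hL hR q hq
      show (if q 0 then aR (Fin.tail q) else aL (Fin.tail q)) = f q
      cases hq0 : q 0
      · have hmem : Fin.tail q ∈ SL :=
          Finset.mem_image_of_mem _ (Finset.mem_filter.mpr ⟨hq, hq0⟩)
        show aL (Fin.tail q) = f q
        rw [hL _ hmem]
        show f (Fin.cons false (Fin.tail q)) = f q
        rw [← hq0, Fin.cons_self_tail]
      · have hmem : Fin.tail q ∈ SR :=
          Finset.mem_image_of_mem _ (Finset.mem_filter.mpr ⟨hq, hq0⟩)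
        show aR (Fin.tail q) = f q
        rw [hR _ hmem]
        show f (Fin.cons true (Fin.tail q)) = f q
        rw [← hq0, Fin.cons_self_tail]
    set vL := aoval n (!g) (ABsub false f) with hvLdef
    set vR := aoval n (!g) (ABsub true f) with hvRdef
    have hv : aoval (n+1) g f = bop g vL vR := aoval_succ g f
    have certL : bop g (!vL) vR ≠ bop g vL vR →
        ∀ aL, (∀ v ∈ SL, aL v = ABsub false f v) → aoval n (!g) aL = vL := by
      intro hflip aL hag
      by_contra hne
      have h1 := hC (ABglue aL (ABsub true f)) (hglue aL _ hag (fun v _ => rfl))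
      rw [aoval_succ] at h1
      simp only [ABsub_false_glue, ABsub_true_glue] at h1
      rw [hv, ABneq _ _ hne] at h1
      exact hflip h1
    have certR : bop g vL (!vR) ≠ bop g vL vR →
        ∀ aR, (∀ v ∈ SR, aR v = ABsub true f v) → aoval n (!g) aR = vR := by
      intro hflip aR hag
      by_contra hne
      have h1 := hC (ABglue (ABsub false f) aR) (hglue _ aR (fun v _ => rfl) hag)
      rw [aoval_succ] at h1
      simp only [ABsub_false_glue, ABsub_true_glue] at h1
      rw [hv, ABneq _ _ hne] at h1
      exact hflip h1
    by_cases hLg : vL = g <;> by_cases hRg : vR = g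
    · have hflipL : bop g (!vL) vR ≠ bop g vL vR := by
        rw [hLg, hRg]; cases g <;> decide
      have hflipR : bop g vL (!vR) ≠ bop g vL vR := by
        rw [hLg, hRg]; cases g <;> decide
      have cL := ih (!g) (ABsub false f) SL (certL hflipL)
      have cR := ih (!g) (ABsub true f) SR (certR hflipR)
      rw [hv, hLg, hRg, bop_id]
      have hcs : certSize (n+1) g g = 2 * certSize n (!g) g := by simp [certSize]
      rw [hcs]
      rw [← hvLdef, hLg] at cL
      rw [← hvRdef, hRg] at cR
      linarith
    · have hRg' : vR = !g := ABneq _ _ hRg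
      have hflipR : bop g vL (!vR) ≠ bop g vL vR := by
        rw [hLg, hRg']; cases g <;> decide
      have cR := ih (!g) (ABsub true f) SR (certR hflipR)
      rw [hv, hLg, hRg', bop_id]
      have hcs : certSize (n+1) g (!g) = certSize n (!g) (!g) := by
        cases g <;> simp [certSize]
      rw [hcs]
      rw [← hvRdef, hRg'] at cR
      linarith
    · have hLg' : vL = !g := ABneq _ _ hLg
      have hflipL : bop g (!vL) vR ≠ bop g vL vR := by
        rw [hLg', hRg]; cases g <;> decide
      have cL := ih (!g) (ABsub false f) SL (certL hflipL)
      rw [hv, hLg', bop_absorb]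
      have hcs : certSize (n+1) g (!g) = certSize n (!g) (!g) := by
        cases g <;> simp [certSize]
      rw [hcs]
      rw [← hvLdef, hLg'] at cL
      linarith
    · have hLg' : vL = !g := ABneq _ _ hLg
      have hRg' : vR = !g := ABneq _ _ hRg
      have hor : (∀ aL, (∀ v ∈ SL, aL v = ABsub false f v) → aoval n (!g) aL = vL) ∨
                 (∀ aR, (∀ v ∈ SR, aR v = ABsub true f v) → aoval n (!g) aR = vR) := by
        by_contra hcon
        push_neg at hcon
        obtain ⟨⟨aL, hagL, hneL⟩, ⟨aR, hagR, hneR⟩⟩ := hcon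
        have h1 := hC (ABglue aL aR) (hglue aL aR hagL hagR)
        rw [aoval_succ] at h1
        simp only [ABsub_false_glue, ABsub_true_glue] at h1
        rw [hv, ABneq _ _ hneL, ABneq _ _ hneR, hLg', hRg', Bool.not_not, bop_id,
          bop_absorb] at h1
        exact ABneq2 g h1.symm
      rw [hv, hLg', bop_absorb]
      have hcs : certSize (n+1) g (!g) = certSize n (!g) (!g) := by
        cases g <;> simp [certSize]
      rw [hcs]
      rcases hor with hcert | hcert
      · have cL := ih (!g) (ABsub false f) SL hcert
        rw [← hvLdef, hLg'] at cL
        linarith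
      · have cR := ih (!g) (ABsub true f) SR hcert
        rw [← hvRdef, hRg'] at cR
        linarith

lemma cost_lower {n : ℕ} (t : DTree n) (g : Bool) (ht : t.correct g)
    (f : (Fin n → Bool) → Bool) : certSize n g (aoval n g f) ≤ t.cost f := by
  have hcert : ∀ f', (∀ q ∈ probes t f, f' q = f q) → aoval n g f' = aoval n g f := by
    intro f' hag
    rw [← ht f', ← ht f]
    exact (probes_agree t f f' hag).1
  exact le_trans (certBound n g f (probes t f) hcert) (probes_card_le t f)

end AB2

/-- Proposition, even height: for a uniform binary AND-OR tree of even
height `2k` under an independent distribution `σ` in which the root has value 0 with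
probability 0 or 1, the minimum over deterministic alpha-beta algorithms of the expected
cost equals `2^k`. -/
theorem minCost_even_height_deterministic_root (k : ℕ) (σ : (Fin (2 * k) → Bool) → ℝ)
    (hσ : validID σ) (hdet : rootProb true σ = 0 ∨ rootProb true σ = 1) :
    IsLeast {c : ℝ | ∃ t : DTree (2 * k), t.correct true ∧ c = eCost t σ} ((2 : ℝ) ^ k) := by
  constructor
  · -- membership: an optimal algorithm of expected cost 2^k exists
    have hpt : ∃ b : Bool, ∀ f, aoval (2*k) true f ≠ b → wt σ f = 0 := by
      rcases hdet with h0 | h1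
      · refine ⟨true, fun f hf => ?_⟩
        have hf' : aoval (2*k) true f = false := ABneq _ _ hf
        have hnn : ∀ f ∈ Finset.univ,
            (0:ℝ) ≤ (if aoval (2*k) true f = false then wt σ f else 0) := by
          intro f _
          by_cases hx : aoval (2*k) true f = false <;>
            simp [hx, ABwt_nonneg hσ]
        have hz := (Finset.sum_eq_zero_iff_of_nonneg hnn).mp h0 f (Finset.mem_univ f)
        rwa [if_pos hf'] at hz
      · refine ⟨false, fun f hf => ?_⟩
        have hf' : aoval (2*k) true f = true := by
          rcases Bool.eq_false_or_eq_true (aoval (2*k) true f) with hx | hx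
          · exact hx
          · exact absurd hx hf
        have hsum0 : ∑ f : (Fin (2*k) → Bool) → Bool,
            (if aoval (2*k) true f = false then 0 else wt σ f) = 0 := by
          have hsplit : ∀ f : (Fin (2*k) → Bool) → Bool, wt σ f
              = (if aoval (2*k) true f = false then wt σ f else 0)
                + (if aoval (2*k) true f = false then 0 else wt σ f) := by
            intro f
            by_cases hx : aoval (2*k) true f = false <;> simp [hx]
          have h2 : (1:ℝ) = 1 + ∑ f : (Fin (2*k) → Bool) → Bool,
              (if aoval (2*k) true f = false then 0 else wt σ f) := by
            calc (1:ℝ) = ∑ f : (Fin (2*k) → Bool) → Bool, wt σ f := (ABsum_wt σ).symm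
              _ = ∑ f : (Fin (2*k) → Bool) → Bool,
                    ((if aoval (2*k) true f = false then wt σ f else 0)
                      + (if aoval (2*k) true f = false then 0 else wt σ f)) :=
                  Finset.sum_congr rfl fun f _ => hsplit f
              _ = rootProb true σ + ∑ f : (Fin (2*k) → Bool) → Bool,
                    (if aoval (2*k) true f = false then 0 else wt σ f) :=
                  Finset.sum_add_distrib
              _ = 1 + _ := by rw [h1]
          linarith
        have hnn : ∀ f ∈ Finset.univ,
            (0:ℝ) ≤ (if aoval (2*k) true f = false then 0 else wt σ f) := by
          intro f _
          by_cases hx : aoval (2*k) true f = false <;>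
            simp [hx, ABwt_nonneg hσ]
        have hz := (Finset.sum_eq_zero_iff_of_nonneg hnn).mp hsum0 f (Finset.mem_univ f)
        rw [hf'] at hz
        simpa using hz
    obtain ⟨b, hb⟩ := hpt
    obtain ⟨t, htc, hte⟩ := exists_opt (2*k) true b σ hb
    refine ⟨t, htc, ?_⟩
    rw [hte, certSize_even]
    push_cast
    ring
  · -- lower bound
    intro c hc
    obtain ⟨t, htc, rfl⟩ := hc
    have hpt : ∀ f : (Fin (2*k) → Bool) → Bool, ((2:ℝ)^k) ≤ (t.cost f : ℝ) := by
      intro f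
      have h1 := cost_lower t true htc f
      rw [certSize_even] at h1
      calc (2:ℝ)^k = ((2^k : ℕ) : ℝ) := by push_cast; ring
        _ ≤ (t.cost f : ℝ) := Nat.cast_le.mpr h1
    calc (2:ℝ)^k
        = ∑ f : (Fin (2*k) → Bool) → Bool, wt σ f * (2:ℝ)^k := by
          rw [← Finset.sum_mul, ABsum_wt, one_mul]
      _ ≤ ∑ f : (Fin (2*k) → Bool) → Bool, wt σ f * (t.cost f : ℝ) :=
          Finset.sum_le_sum (fun f _ => mul_le_mul_of_nonneg_left (hpt f) (ABwt_nonneg hσ f))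
      _ = eCost t σ := rfl
end

section
/- For a uniform binary AND-OR tree of odd height h = 2k+1 under an independent distribution in which the root deterministically has value i, the minimum expected cost over deterministic alpha-beta algorithms is 2^k if (i = 0 and the root is an AND gate) or (i = 1 and the root is an OR gate), and 2^{k+1} otherwise. -/
namespace AB

/-- restriction of a function on `(n+1)`-paths to the `b`-subtree -/
def res {m : ℕ} {α : Sort*} (b : Bool) (f : (Fin (m+1) → Bool) → α) (v : Fin m → Bool) : α :=
  f (Fin.cons b v)

/-- glue two subtree assignments -/
def glue {m : ℕ} (f0 f1 : (Fin m → Bool) → Bool) : (Fin (m+1) → Bool) → Bool :=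
  fun q => if q 0 then f1 (Fin.tail q) else f0 (Fin.tail q)

@[simp] lemma res_glue_false {m : ℕ} (f0 f1 : (Fin m → Bool) → Bool) :
    res false (glue f0 f1) = f0 := by
  funext v; simp [res, glue, Fin.tail_cons]

@[simp] lemma res_glue_true {m : ℕ} (f0 f1 : (Fin m → Bool) → Bool) :
    res true (glue f0 f1) = f1 := by
  funext v; simp [res, glue, Fin.tail_cons]

@[simp] lemma glue_res {m : ℕ} (f : (Fin (m+1) → Bool) → Bool) :
    glue (res false f) (res true f) = f := by
  funext q
  by_cases h : q 0 = true
  · simp only [glue, res, if_pos h]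
    rw [← h, Fin.cons_self_tail]
  · have h' : q 0 = false := by simpa using h
    simp only [glue, res, h', Bool.false_eq_true, if_false]
    rw [← h', Fin.cons_self_tail]

def glueEquiv (m : ℕ) :
    (((Fin m → Bool) → Bool) × ((Fin m → Bool) → Bool)) ≃ ((Fin (m+1) → Bool) → Bool) where
  toFun p := glue p.1 p.2
  invFun f := (res false f, res true f)
  left_inv p := by simp
  right_inv f := by simp

lemma sum_glue {m : ℕ} {M : Type*} [AddCommMonoid M] (F : ((Fin (m+1) → Bool) → Bool) → M) :
    ∑ f, F f = ∑ f0 : (Fin m → Bool) → Bool, ∑ f1 : (Fin m → Bool) → Bool, F (glue f0 f1) := by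
  rw [← Equiv.sum_comp (glueEquiv m) F, Fintype.sum_prod_type]
  rfl

def consE (m : ℕ) : (Bool × (Fin m → Bool)) ≃ (Fin (m+1) → Bool) where
  toFun p := Fin.cons p.1 p.2
  invFun q := (q 0, Fin.tail q)
  left_inv p := by simp
  right_inv q := by simp [Fin.cons_self_tail]

lemma wt_glue {m : ℕ} (σ : (Fin (m+1) → Bool) → ℝ) (f0 f1 : (Fin m → Bool) → Bool) :
    wt σ (glue f0 f1) = wt (res false σ) f0 * wt (res true σ) f1 := by
  unfold wt
  rw [← Equiv.prod_comp (consE m)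
    (fun q => if glue f0 f1 q then 1 - σ q else σ q), Fintype.prod_prod_type]
  rw [Fintype.prod_bool]
  rw [mul_comm]
  congr 1

lemma aoval_succ {m : ℕ} (g : Bool) (f : (Fin (m+1) → Bool) → Bool) :
    aoval (m+1) g f =
      if g then aoval m (!g) (res false f) && aoval m (!g) (res true f)
      else aoval m (!g) (res false f) || aoval m (!g) (res true f) := rfl

lemma wt_nonneg {m : ℕ} {σ : (Fin m → Bool) → ℝ} (hσ : validID σ) (f : (Fin m → Bool) → Bool) :
    0 ≤ wt σ f := by
  apply Finset.prod_nonneg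
  intro q _
  rcases hσ q with ⟨h0, h1⟩
  split <;> linarith

lemma validID_res {m : ℕ} {σ : (Fin (m+1) → Bool) → ℝ} (hσ : validID σ) (b : Bool) :
    validID (res b σ) := fun q => hσ _

lemma tot_eq_one : ∀ (m : ℕ) (σ : (Fin m → Bool) → ℝ), ∑ f, wt σ f = 1 := by
  intro m
  induction m with
  | zero =>
    intro σ
    rw [← Equiv.sum_comp (Equiv.funUnique (Fin 0 → Bool) Bool).symm (wt σ)]
    rw [Fintype.sum_bool]
    unfold wt
    rw [Fintype.prod_unique, Fintype.prod_unique]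
    simp [Equiv.funUnique]
  | succ m ih =>
    intro σ
    rw [sum_glue (wt σ)]
    have : ∀ f0 : (Fin m → Bool) → Bool, ∑ f1 : (Fin m → Bool) → Bool, wt σ (glue f0 f1)
        = wt (res false σ) f0 := by
      intro f0
      rw [Finset.sum_congr rfl (fun f1 _ => wt_glue σ f0 f1), ← Finset.mul_sum, ih, mul_one]
    rw [Finset.sum_congr rfl (fun f0 _ => this f0), ih]

/-- lift a decision tree on a subtree to the full tree -/
def liftQ {m : ℕ} (b : Bool) : DTree m → DTree (m+1)
  | .ans a => .ans a
  | .query q t0 t1 => .query (Fin.cons b q) (liftQ b t0) (liftQ b t1)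

@[simp] lemma run_liftQ {m : ℕ} (b : Bool) (t : DTree m) (f : (Fin (m+1) → Bool) → Bool) :
    (liftQ b t).run f = t.run (res b f) := by
  induction t with
  | ans a => rfl
  | query q t0 t1 ih0 ih1 =>
    simp only [liftQ, DTree.run, ih0, ih1]
    rfl

@[simp] lemma cost_liftQ {m : ℕ} (b : Bool) (t : DTree m) (f : (Fin (m+1) → Bool) → Bool) :
    (liftQ b t).cost f = t.cost (res b f) := by
  induction t with
  | ans a => rfl
  | query q t0 t1 ih0 ih1 =>
    simp only [liftQ, DTree.cost, ih0, ih1]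
    rfl

/-- sequence a decision tree with a continuation depending on its answer -/
def seq {m : ℕ} : DTree m → (Bool → DTree m) → DTree m
  | .ans a, k => k a
  | .query q t0 t1, k => .query q (seq t0 k) (seq t1 k)

@[simp] lemma run_seq {m : ℕ} (t : DTree m) (k : Bool → DTree m) (f : (Fin m → Bool) → Bool) :
    (seq t k).run f = (k (t.run f)).run f := by
  induction t with
  | ans a => rfl
  | query q t0 t1 ih0 ih1 =>
    simp only [seq, DTree.run, ih0, ih1]
    split <;> rfl

@[simp] lemma cost_seq {m : ℕ} (t : DTree m) (k : Bool → DTree m) (f : (Fin m → Bool) → Bool) :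
    (seq t k).cost f = t.cost f + (k (t.run f)).cost f := by
  induction t with
  | ans a => simp [seq, DTree.cost, DTree.run]
  | query q t0 t1 ih0 ih1 =>
    simp only [seq, DTree.cost, DTree.run, ih0, ih1]
    split <;> ring

/-- the base tree of height 0: probe the unique leaf -/
def baseT {m : ℕ} (hm : m = 0) : DTree m :=
  .query (fun j => (hm ▸ j).elim0) (.ans false) (.ans true)

lemma baseT_correct (g : Bool) : (baseT (m := 0) rfl).correct g := by
  intro f
  show (if f _ then (DTree.ans true).run f else (DTree.ans false).run f) = f _
  rcases h : f (fun j => j.elim0) <;> simp [baseT, DTree.run, h]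

lemma baseT_cost (f : (Fin 0 → Bool) → Bool) : (baseT (m := 0) rfl).cost f = 1 := by
  rcases h : f (fun j => j.elim0) <;> simp [baseT, DTree.cost, h]

/-- existence of a correct tree for every height and gate -/
lemma exists_correct : ∀ (m : ℕ) (g : Bool), ∃ t : DTree m, t.correct g := by
  intro m
  induction m with
  | zero => exact fun g => ⟨baseT rfl, baseT_correct g⟩
  | succ m ih =>
    intro g
    obtain ⟨t0, h0⟩ := ih (!g)
    obtain ⟨t1, h1⟩ := ih (!g)
    refine ⟨seq (liftQ false t0) (fun x => seq (liftQ true t1)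
      (fun y => .ans (if g then x && y else x || y))), ?_⟩
    intro f
    simp only [run_seq, run_liftQ, DTree.run, h0 (res false f), h1 (res true f)]
    rfl
/-- probability that the gate-`g` tree has value `v` -/
noncomputable def pval (m : ℕ) (g : Bool) (σ : (Fin m → Bool) → ℝ) (v : Bool) : ℝ :=
  ∑ f : (Fin m → Bool) → Bool, if aoval m g f = v then wt σ f else 0

lemma pval_nonneg {m : ℕ} {σ : (Fin m → Bool) → ℝ} (hσ : validID σ) (g v : Bool) :
    0 ≤ pval m g σ v := by
  apply Finset.sum_nonneg
  intro f _
  split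
  · exact wt_nonneg hσ f
  · exact le_refl 0

lemma pval_add {m : ℕ} (g : Bool) (σ : (Fin m → Bool) → ℝ) :
    pval m g σ true + pval m g σ false = 1 := by
  unfold pval
  rw [← Finset.sum_add_distrib]
  rw [← tot_eq_one m σ]
  apply Finset.sum_congr rfl
  intro f _
  rcases h : aoval m g f <;> simp [h]

lemma pval_le_one {m : ℕ} {σ : (Fin m → Bool) → ℝ} (hσ : validID σ) (g v : Bool) :
    pval m g σ v ≤ 1 := by
  have h := pval_add g σ
  rcases v
  · nlinarith [pval_nonneg hσ g true]
  · nlinarith [pval_nonneg hσ g false]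

/-- product formula: for an AND gate, P(value = 1) multiplies; for OR, P(value = 0). -/
lemma pval_succ_prod {m : ℕ} (g : Bool) (σ : (Fin (m+1) → Bool) → ℝ) :
    pval (m+1) g σ g = pval m (!g) (res false σ) g * pval m (!g) (res true σ) g := by
  unfold pval
  rw [sum_glue (fun f => if aoval (m+1) g f = g then wt σ f else 0)]
  rw [Finset.sum_mul_sum]
  apply Finset.sum_congr rfl
  intro f0 _
  apply Finset.sum_congr rfl
  intro f1 _
  rw [aoval_succ, wt_glue]
  rcases g <;> rcases h0 : aoval m true (res false (glue f0 f1)) <;>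
    rcases h1 : aoval m true (res true (glue f0 f1)) <;>
    rcases h0' : aoval m false (res false (glue f0 f1)) <;>
    rcases h1' : aoval m false (res true (glue f0 f1)) <;>
    simp_all <;> ring

/-- the root deterministically has value `i` -/
def Det (m : ℕ) (g i : Bool) (σ : (Fin m → Bool) → ℝ) : Prop := pval m g σ (!i) = 0

lemma Det.pval_eq_one {m : ℕ} {g i : Bool} {σ : (Fin m → Bool) → ℝ}
    (hd : Det m g i σ) : pval m g σ i = 1 := by
  have h := pval_add g σ
  unfold Det at hd
  rcases i <;> simp_all

lemma det_succ_same {m : ℕ} {g i : Bool} {σ : (Fin (m+1) → Bool) → ℝ} (hσ : validID σ)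
    (hgi : g = i) (hd : Det (m+1) g i σ) :
    Det m (!g) i (res false σ) ∧ Det m (!g) i (res true σ) := by
  have h1 : pval (m+1) g σ g = 1 := hgi ▸ hd.pval_eq_one
  rw [pval_succ_prod] at h1
  have c0 := pval_nonneg (validID_res hσ false) (!g) g
  have c1 := pval_nonneg (validID_res hσ true) (!g) g
  have d0 := pval_le_one (validID_res hσ false) (!g) g
  have d1 := pval_le_one (validID_res hσ true) (!g) g
  have e0 : pval m (!g) (res false σ) g = 1 := by nlinarith
  have e1 : pval m (!g) (res true σ) g = 1 := by nlinarith
  have a0 := pval_add (!g) (res false σ)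
  have a1 := pval_add (!g) (res true σ)
  unfold Det
  subst hgi
  constructor
  · rcases g <;> simp_all <;> linarith
  · rcases g <;> simp_all <;> linarith

lemma det_succ_diff {m : ℕ} {g i : Bool} {σ : (Fin (m+1) → Bool) → ℝ}
    (hgi : g = !i) (hd : Det (m+1) g i σ) :
    Det m (!g) i (res false σ) ∨ Det m (!g) i (res true σ) := by
  unfold Det at hd ⊢
  rw [← hgi, pval_succ_prod] at hd
  rcases mul_eq_zero.mp hd with h | h
  · left; rw [← hgi]; exact h
  · right; rw [← hgi]; exact h

/-- certificate-size / cost function -/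
def C : ℕ → Bool → Bool → ℕ
  | 0, _, _ => 1
  | n+1, g, i => (if g = i then 2 else 1) * C n (!g) i

/-- probe side `b` first; if its value is `g`, probe the other side, else answer `!g` -/
def comb {m : ℕ} (g b : Bool) (tA tB : DTree m) : DTree (m+1) :=
  seq (liftQ b tA) (fun x => if x = g then liftQ (!b) tB else .ans (!g))

lemma comb_correct {m : ℕ} {g b : Bool} {tA tB : DTree m}
    (hA : tA.correct (!g)) (hB : tB.correct (!g)) : (comb g b tA tB).correct g := by
  intro f
  have e : aoval (m+1) g f =
      if g then aoval m (!g) (res false f) && aoval m (!g) (res true f)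
      else aoval m (!g) (res false f) || aoval m (!g) (res true f) := rfl
  rw [e]
  simp only [comb, run_seq, run_liftQ, hA (res b f)]
  rcases b <;> [skip; skip] <;>
    (first
      | (simp only [Bool.not_false, Bool.not_true]
         rcases h0 : aoval m (!g) (res false f) with _ | _ <;>
           rcases h1 : aoval m (!g) (res true f) with _ | _ <;>
           rcases g <;>
           simp_all [run_liftQ, hB (res false f), hB (res true f), DTree.run]))

lemma cost_comb {m : ℕ} {g b : Bool} {tA tB : DTree m} (hA : tA.correct (!g))
    (f : (Fin (m+1) → Bool) → Bool) :
    (comb g b tA tB).cost f =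
      tA.cost (res b f) + (if aoval m (!g) (res b f) = g then tB.cost (res (!b) f) else 0) := by
  simp only [comb, cost_seq, cost_liftQ, run_liftQ, hA (res b f)]
  split <;> simp [DTree.cost]

lemma sum_split {X : Type*} [Fintype X] (w0 w1 A B : X → ℝ) (P : X → Prop) [DecidablePred P]
    (hw1 : ∑ f1, w1 f1 = 1) :
    ∑ f0 : X, ∑ f1 : X, w0 f0 * w1 f1 * (A f0 + (if P f0 then B f1 else 0)) =
      (∑ f0, w0 f0 * A f0) +
        (∑ f0, if P f0 then w0 f0 else 0) * (∑ f1, w1 f1 * B f1) := by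
  have key : ∀ f0, ∑ f1 : X, w0 f0 * w1 f1 * (A f0 + (if P f0 then B f1 else 0)) =
      w0 f0 * A f0 + (if P f0 then w0 f0 else 0) * (∑ f1, w1 f1 * B f1) := by
    intro f0
    by_cases h : P f0
    · simp only [if_pos h]
      have : ∀ f1, w0 f0 * w1 f1 * (A f0 + B f1)
          = w0 f0 * A f0 * w1 f1 + w0 f0 * (w1 f1 * B f1) := by intro f1; ring
      rw [Finset.sum_congr rfl (fun f1 _ => this f1), Finset.sum_add_distrib,
        ← Finset.mul_sum, ← Finset.mul_sum, hw1, mul_one]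
    · simp only [if_neg h, add_zero, zero_mul]
      have : ∀ f1, w0 f0 * w1 f1 * A f0 = w0 f0 * A f0 * w1 f1 := by intro f1; ring
      rw [Finset.sum_congr rfl (fun f1 _ => this f1), ← Finset.mul_sum, hw1, mul_one]
  rw [Finset.sum_congr rfl (fun f0 _ => key f0), Finset.sum_add_distrib, ← Finset.sum_mul]

lemma eCost_comb {m : ℕ} (g b : Bool) (tA tB : DTree m) (σ : (Fin (m+1) → Bool) → ℝ)
    (hA : tA.correct (!g)) :
    eCost (comb g b tA tB) σ =
      eCost tA (res b σ) + pval m (!g) (res b σ) g * eCost tB (res (!b) σ) := by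
  unfold eCost
  rw [sum_glue (fun f => wt σ f * ((comb g b tA tB).cost f : ℝ))]
  rcases b
  · have key : ∀ f0 f1 : (Fin m → Bool) → Bool,
        wt σ (glue f0 f1) * (((comb g false tA tB).cost (glue f0 f1) : ℕ) : ℝ)
        = wt (res false σ) f0 * wt (res true σ) f1 *
          ((tA.cost f0 : ℝ) + (if aoval m (!g) f0 = g then (tB.cost f1 : ℝ) else 0)) := by
      intro f0 f1
      rw [wt_glue, cost_comb hA]
      simp only [res_glue_false, res_glue_true, Bool.not_false]
      push_cast [apply_ite (Nat.cast : ℕ → ℝ)]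
      ring_nf
    rw [Finset.sum_congr rfl (fun f0 _ => Finset.sum_congr rfl (fun f1 _ => key f0 f1))]
    rw [sum_split _ _ _ _ _ (tot_eq_one m (res true σ))]
    rfl
  · have key : ∀ f0 f1 : (Fin m → Bool) → Bool,
        wt σ (glue f0 f1) * (((comb g true tA tB).cost (glue f0 f1) : ℕ) : ℝ)
        = wt (res true σ) f1 * wt (res false σ) f0 *
          ((tA.cost f1 : ℝ) + (if aoval m (!g) f1 = g then (tB.cost f0 : ℝ) else 0)) := by
      intro f0 f1
      rw [wt_glue, cost_comb hA]
      simp only [res_glue_false, res_glue_true, Bool.not_true]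
      push_cast [apply_ite (Nat.cast : ℕ → ℝ)]
      ring_nf
    rw [Finset.sum_congr rfl (fun f0 _ => Finset.sum_congr rfl (fun f1 _ => key f0 f1))]
    rw [Finset.sum_comm]
    rw [sum_split _ _ _ _ _ (tot_eq_one m (res false σ))]
    rfl

lemma eCost_baseT (σ : (Fin 0 → Bool) → ℝ) : eCost (baseT rfl) σ = 1 := by
  unfold eCost
  rw [Finset.sum_congr rfl (fun f _ => by rw [baseT_cost f, Nat.cast_one, mul_one])]
  exact tot_eq_one 0 σ

lemma upper : ∀ (m : ℕ) (g i : Bool) (σ : (Fin m → Bool) → ℝ), validID σ → Det m g i σ →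
    ∃ t : DTree m, t.correct g ∧ eCost t σ = (C m g i : ℝ) := by
  intro m
  induction m with
  | zero =>
    intro g i σ _ _
    exact ⟨baseT rfl, baseT_correct g, by rw [eCost_baseT]; norm_num [C]⟩
  | succ m ih =>
    intro g i σ hσ hd
    by_cases hgi : g = i
    · obtain ⟨h0, h1⟩ := det_succ_same hσ hgi hd
      obtain ⟨t0, c0, e0⟩ := ih (!g) i (res false σ) (validID_res hσ false) h0
      obtain ⟨t1, c1, e1⟩ := ih (!g) i (res true σ) (validID_res hσ true) h1
      refine ⟨comb g false t0 t1, comb_correct c0 c1, ?_⟩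
      rw [eCost_comb g false t0 t1 σ c0]
      simp only [Bool.not_false, Bool.not_true]
      have hp : pval m (!g) (res false σ) g = 1 := by
        have := h0.pval_eq_one
        rwa [← hgi] at this
      rw [hp, e0, e1, one_mul]
      simp only [C, if_pos hgi]
      push_cast
      ring
    · have hgi' : g = !i := by rcases g <;> rcases i <;> simp_all
      have hC : (C (m+1) g i : ℝ) = (C m (!g) i : ℝ) := by
        simp [C, hgi]
      rcases det_succ_diff hgi' hd with h | h
      · obtain ⟨t0, c0, e0⟩ := ih (!g) i (res false σ) (validID_res hσ false) h
        obtain ⟨t1, c1⟩ := exists_correct m (!g)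
        refine ⟨comb g false t0 t1, comb_correct c0 c1, ?_⟩
        rw [eCost_comb g false t0 t1 σ c0]
        simp only [Bool.not_false, Bool.not_true]
        have hp : pval m (!g) (res false σ) g = 0 := by
          unfold Det at h
          rwa [← hgi'] at h
        rw [hp, e0, zero_mul, add_zero, hC]
      · obtain ⟨t0, c0, e0⟩ := ih (!g) i (res true σ) (validID_res hσ true) h
        obtain ⟨t1, c1⟩ := exists_correct m (!g)
        refine ⟨comb g true t0 t1, comb_correct c0 c1, ?_⟩
        rw [eCost_comb g true t0 t1 σ c0]
        simp only [Bool.not_false, Bool.not_true]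
        have hp : pval m (!g) (res true σ) g = 0 := by
          unfold Det at h
          rwa [← hgi'] at h
        rw [hp, e0, zero_mul, add_zero, hC]

/-- the set of leaves probed by `t` on assignment `f` -/
def probed {m : ℕ} : DTree m → ((Fin m → Bool) → Bool) → Finset (Fin m → Bool)
  | .ans _, _ => ∅
  | .query q t0 t1, f => insert q (if f q then probed t1 f else probed t0 f)

lemma card_probed_le_cost {m : ℕ} (t : DTree m) (f : (Fin m → Bool) → Bool) :
    (probed t f).card ≤ t.cost f := by
  induction t with
  | ans a => simp [probed, DTree.cost]
  | query q t0 t1 ih0 ih1 =>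
    rcases h : f q with _ | _
    · have e1 : probed (.query q t0 t1) f = insert q (probed t0 f) := by
        simp [probed, h]
      have e2 : (DTree.query q t0 t1).cost f = 1 + t0.cost f := by
        simp [DTree.cost, h]
      rw [e1, e2]
      have := Finset.card_insert_le q (probed t0 f)
      omega
    · have e1 : probed (.query q t0 t1) f = insert q (probed t1 f) := by
        simp [probed, h]
      have e2 : (DTree.query q t0 t1).cost f = 1 + t1.cost f := by
        simp [DTree.cost, h]
      rw [e1, e2]
      have := Finset.card_insert_le q (probed t1 f)
      omega

lemma run_agree {m : ℕ} (t : DTree m) (f f' : (Fin m → Bool) → Bool)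
    (h : ∀ q ∈ probed t f, f' q = f q) : t.run f' = t.run f := by
  induction t with
  | ans a => rfl
  | query q t0 t1 ih0 ih1 =>
    have hq : f' q = f q := h q (Finset.mem_insert_self _ _)
    have hsub : ∀ p ∈ (if f q then probed t1 f else probed t0 f), f' p = f p := by
      intro p hp
      exact h p (Finset.mem_insert_of_mem hp)
    simp only [DTree.run, hq]
    rcases hfq : f q with _ | _
    · rw [hfq] at hsub
      simp only [hfq, Bool.false_eq_true, if_false]
      exact ih0 (by simpa using hsub)
    · rw [hfq] at hsub
      simp only [hfq, if_true]
      exact ih1 (by simpa using hsub)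

lemma forces_card : ∀ (m : ℕ) (g : Bool) (f : (Fin m → Bool) → Bool)
    (S : Finset (Fin m → Bool)),
    (∀ f', (∀ q ∈ S, f' q = f q) → aoval m g f' = aoval m g f) →
    C m g (aoval m g f) ≤ S.card := by
  intro m
  induction m with
  | zero =>
    intro g f S hS
    have hne : S.Nonempty := by
      rcases Finset.eq_empty_or_nonempty S with h | h
      · exfalso
        have h1 := hS (fun _ => true) (by simp [h])
        have h2 := hS (fun _ => false) (by simp [h])
        have e1 : aoval 0 g (fun _ => true) = true := rfl
        have e2 : aoval 0 g (fun _ => false) = false := rfl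
        rw [e1] at h1; rw [e2] at h2
        exact absurd (h1.trans h2.symm) (by decide)
      · exact h
    have : C 0 g (aoval 0 g f) = 1 := rfl
    rw [this]
    exact Nat.one_le_iff_ne_zero.mpr (Finset.card_ne_zero_of_mem hne.choose_spec)
  | succ m ih =>
    intro g f S hS
    set S0 : Finset (Fin m → Bool) :=
      (S.filter (fun q => q 0 = false)).image Fin.tail with hS0
    set S1 : Finset (Fin m → Bool) :=
      (S.filter (fun q => q 0 = true)).image Fin.tail with hS1
    have hcard : S0.card + S1.card ≤ S.card := by
      calc S0.card + S1.card
          ≤ (S.filter (fun q => q 0 = false)).card + (S.filter (fun q => q 0 = true)).card :=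
            Nat.add_le_add (Finset.card_image_le) (Finset.card_image_le)
        _ = S.card := by
            have he : S.filter (fun q => q 0 = true) = S.filter (fun q => ¬ q 0 = false) := by
              apply Finset.filter_congr
              intro q _
              simp
            rw [he, Finset.card_filter_add_card_filter_not]
    have hmem0 : ∀ q ∈ S, q 0 = false → Fin.tail q ∈ S0 := by
      intro q hq hq0
      exact Finset.mem_image_of_mem _ (Finset.mem_filter.mpr ⟨hq, hq0⟩)
    have hmem1 : ∀ q ∈ S, q 0 = true → Fin.tail q ∈ S1 := by
      intro q hq hq0
      exact Finset.mem_image_of_mem _ (Finset.mem_filter.mpr ⟨hq, hq0⟩)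
    -- gluing adversary assignments
    have hglue : ∀ f0' f1', (∀ v ∈ S0, f0' v = res false f v) →
        (∀ v ∈ S1, f1' v = res true f v) →
        aoval (m+1) g (glue f0' f1') = aoval (m+1) g f := by
      intro f0' f1' a0 a1
      apply hS
      intro q hq
      rcases hq0 : q 0 with _ | _
      · have : glue f0' f1' q = f0' (Fin.tail q) := by simp [glue, hq0]
        rw [this, a0 _ (hmem0 q hq hq0)]
        show f (Fin.cons false (Fin.tail q)) = f q
        rw [← hq0, Fin.cons_self_tail]
      · have : glue f0' f1' q = f1' (Fin.tail q) := by simp [glue, hq0]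
        rw [this, a1 _ (hmem1 q hq hq0)]
        show f (Fin.cons true (Fin.tail q)) = f q
        rw [← hq0, Fin.cons_self_tail]
    have eval : aoval (m+1) g f =
        if g then aoval m (!g) (res false f) && aoval m (!g) (res true f)
        else aoval m (!g) (res false f) || aoval m (!g) (res true f) := rfl
    by_cases hgb : aoval (m+1) g f = g
    · -- both subtrees are forced
      have hl : aoval m (!g) (res false f) = g ∧ aoval m (!g) (res true f) = g := by
        rw [eval] at hgb
        revert hgb
        have : ∀ (gg l r : Bool), (if gg = true then l && r else l || r) = gg →
            l = gg ∧ r = gg := by decide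
        exact this g _ _
      have f0force : ∀ f0', (∀ v ∈ S0, f0' v = res false f v) →
          aoval m (!g) f0' = aoval m (!g) (res false f) := by
        intro f0' a0
        have h1 := hglue f0' (res true f) a0 (fun v _ => rfl)
        rw [hgb] at h1
        have e1 : aoval (m+1) g (glue f0' (res true f)) =
            if g then aoval m (!g) f0' && aoval m (!g) (res true f)
            else aoval m (!g) f0' || aoval m (!g) (res true f) := by
          rw [aoval_succ]; rw [res_glue_false, res_glue_true]
        rw [e1] at h1
        rw [hl.1]
        rw [hl.2] at h1
        revert h1
        have : ∀ (gg x : Bool), (if gg = true then x && gg else x || gg) = gg → x = gg := by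
          decide
        exact this g _
      have f1force : ∀ f1', (∀ v ∈ S1, f1' v = res true f v) →
          aoval m (!g) f1' = aoval m (!g) (res true f) := by
        intro f1' a1
        have h1 := hglue (res false f) f1' (fun v _ => rfl) a1
        rw [hgb] at h1
        have e1 : aoval (m+1) g (glue (res false f) f1') =
            if g then aoval m (!g) (res false f) && aoval m (!g) f1'
            else aoval m (!g) (res false f) || aoval m (!g) f1' := by
          rw [aoval_succ]; rw [res_glue_false, res_glue_true]
        rw [e1] at h1
        rw [hl.2]
        rw [hl.1] at h1
        revert h1
        have : ∀ (gg y : Bool), (if gg = true then gg && y else gg || y) = gg → y = gg := by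
          decide
        exact this g _
      have i0 := ih (!g) (res false f) S0 f0force
      have i1 := ih (!g) (res true f) S1 f1force
      rw [hl.1] at i0
      rw [hl.2] at i1
      have hCst : C (m+1) g (aoval (m+1) g f) = C m (!g) g + C m (!g) g := by
        rw [hgb]
        show (if g = g then 2 else 1) * C m (!g) g = _
        simp [two_mul]
      rw [hCst]
      calc C m (!g) g + C m (!g) g ≤ S0.card + S1.card := Nat.add_le_add i0 i1
        _ ≤ S.card := hcard
    · -- only one subtree forced
      have hb : aoval (m+1) g f = !g := by
        revert hgb
        have : ∀ (a gg : Bool), ¬(a = gg) → a = !gg := by decide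
        exact this _ g
      have hCst : C (m+1) g (aoval (m+1) g f) = C m (!g) (!g) := by
        rw [hb]
        show (if g = !g then 2 else 1) * C m (!g) (!g) = _
        rcases g <;> simp
      rw [hCst]
      by_cases hbad : ∃ f0', (∀ v ∈ S0, f0' v = res false f v) ∧ aoval m (!g) f0' = g
      · -- side 1 is forced to value !g
        obtain ⟨f0', a0, hv0⟩ := hbad
        have f1force : ∀ f1', (∀ v ∈ S1, f1' v = res true f v) →
            aoval m (!g) f1' = !g := by
          intro f1' a1
          have h1 := hglue f0' f1' a0 a1
          rw [hb] at h1
          have e1 : aoval (m+1) g (glue f0' f1') =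
              if g then aoval m (!g) f0' && aoval m (!g) f1'
              else aoval m (!g) f0' || aoval m (!g) f1' := by
            rw [aoval_succ]; rw [res_glue_false, res_glue_true]
          rw [e1, hv0] at h1
          revert h1
          have : ∀ (gg y : Bool), (if gg = true then gg && y else gg || y) = !gg → y = !gg := by
            decide
          exact this g _
        have hr : aoval m (!g) (res true f) = !g := f1force (res true f) (fun v _ => rfl)
        have i1 := ih (!g) (res true f) S1
          (fun f1' a1 => by rw [f1force f1' a1, hr])
        rw [hr] at i1
        calc C m (!g) (!g) ≤ S1.card := i1
          _ ≤ S.card := le_trans (Nat.le_add_left _ _) hcard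
      · -- side 0 is forced to value !g
        push_neg at hbad
        have f0force : ∀ f0', (∀ v ∈ S0, f0' v = res false f v) →
            aoval m (!g) f0' = !g := by
          intro f0' a0
          have hne := hbad f0' a0
          revert hne
          have : ∀ (a gg : Bool), ¬(a = gg) → a = !gg := by decide
          exact this _ g
        have hr : aoval m (!g) (res false f) = !g := f0force (res false f) (fun v _ => rfl)
        have i0 := ih (!g) (res false f) S0
          (fun f0' a0 => by rw [f0force f0' a0, hr])
        rw [hr] at i0
        calc C m (!g) (!g) ≤ S0.card := i0
          _ ≤ S.card := le_trans (Nat.le_add_right _ _) hcard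

lemma cost_lower {m : ℕ} {g : Bool} {t : DTree m} (ht : t.correct g)
    (f : (Fin m → Bool) → Bool) : C m g (aoval m g f) ≤ t.cost f := by
  refine le_trans (forces_card m g f (probed t f) ?_) (card_probed_le_cost t f)
  intro f' ha
  rw [← ht f', ← ht f]
  exact run_agree t f f' ha

lemma wt_eq_zero {m : ℕ} {g i : Bool} {σ : (Fin m → Bool) → ℝ} (hσ : validID σ)
    (hd : Det m g i σ) : ∀ f, aoval m g f = !i → wt σ f = 0 := by
  intro f hf
  have h := (Finset.sum_eq_zero_iff_of_nonneg (fun f _ => by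
    split
    · exact wt_nonneg hσ f
    · exact le_refl 0)).mp hd f (Finset.mem_univ f)
  rw [if_pos hf] at h
  exact h

lemma eCost_lower {m : ℕ} {g i : Bool} {σ : (Fin m → Bool) → ℝ} (hσ : validID σ)
    (hd : Det m g i σ) {t : DTree m} (ht : t.correct g) :
    (C m g i : ℝ) ≤ eCost t σ := by
  have hz := wt_eq_zero hσ hd
  calc (C m g i : ℝ) = (C m g i : ℝ) * pval m g σ i := by rw [hd.pval_eq_one, mul_one]
    _ = ∑ f : (Fin m → Bool) → Bool,
        (if aoval m g f = i then (C m g i : ℝ) * wt σ f else 0) := by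
        unfold pval
        rw [Finset.mul_sum]
        apply Finset.sum_congr rfl
        intro f _
        split <;> simp
    _ ≤ ∑ f : (Fin m → Bool) → Bool, wt σ f * (t.cost f : ℝ) := by
        apply Finset.sum_le_sum
        intro f _
        by_cases hf : aoval m g f = i
        · rw [if_pos hf]
          have hcost : (C m g i : ℝ) ≤ (t.cost f : ℝ) := by
            have := cost_lower ht f
            rw [hf] at this
            exact_mod_cast this
          have hw := wt_nonneg hσ f
          nlinarith
        · rw [if_neg hf]
          have hfi : aoval m g f = !i := by
            revert hf
            have : ∀ (a b : Bool), ¬(a = b) → a = !b := by decide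
            exact this _ _
          rw [hz f hfi, zero_mul]
    _ = eCost t σ := rfl

lemma C_odd : ∀ (k : ℕ) (g i : Bool), C (2*k+1) g i = 2^k * C 1 g i := by
  intro k
  induction k with
  | zero => intro g i; simp
  | succ k ih =>
    intro g i
    have e : 2*(k+1)+1 = (2*k+1)+1+1 := by ring
    rw [e]
    have e2 : C ((2*k+1)+1+1) g i =
        (if g = i then 2 else 1) * ((if (!g) = i then 2 else 1) * C (2*k+1) (!(!g)) i) := rfl
    rw [Bool.not_not] at e2
    rw [e2, ih]
    rcases g <;> rcases i <;> simp [pow_succ] <;> ring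

end AB

/-- Proposition, odd height: for a uniform binary tree of odd height
`2k+1` with alternating gates and root gate `gate` (`true` = AND, `false` = OR), under an
independent distribution `σ` in which the root deterministically has value `i`
(`i = false` meaning value 0), the minimum over deterministic alpha-beta algorithms of
the expected cost is `2^k` if (`i = 0` and the root is an AND gate) or (`i = 1` and the
root is an OR gate), and `2^(k+1)` otherwise. -/
theorem minCost_odd_height_deterministic_root (k : ℕ) (gate i : Bool)
    (σ : (Fin (2 * k + 1) → Bool) → ℝ) (hσ : validID σ)
    (hdet : rootProb gate σ = if i then 0 else 1) :
    IsLeast {c : ℝ | ∃ t : DTree (2 * k + 1), t.correct gate ∧ c = eCost t σ}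
      (if (i = false ∧ gate = true) ∨ (i = true ∧ gate = false)
        then (2 : ℝ) ^ k else (2 : ℝ) ^ (k + 1)) := by
  have hr : rootProb gate σ = AB.pval (2*k+1) gate σ false := rfl
  have hDet : AB.Det (2*k+1) gate i σ := by
    rcases i
    · unfold AB.Det
      have h1 : AB.pval (2*k+1) gate σ false = 1 := by rw [← hr, hdet]; simp
      have h2 := AB.pval_add gate σ
      simp only [Bool.not_false]
      linarith
    · unfold AB.Det
      simp only [Bool.not_true]
      rw [← hr, hdet]
      simp
  have hC : ((AB.C (2*k+1) gate i : ℕ) : ℝ) =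
      (if (i = false ∧ gate = true) ∨ (i = true ∧ gate = false)
        then (2:ℝ)^k else 2^(k+1)) := by
    rw [AB.C_odd]
    rcases gate <;> rcases i <;> simp [AB.C] <;> push_cast <;> ring
  obtain ⟨t, hcor, hec⟩ := AB.upper (2*k+1) gate i σ hσ hDet
  constructor
  · refine ⟨t, hcor, ?_⟩
    rw [← hC, hec]
  · rintro c ⟨t', hcor', rfl⟩
    rw [← hC]
    exact AB.eCost_lower hσ hDet hcor'
end

section
/- The polynomial f(x) = x^6 + 2x^5 - 2x^4 - 6x^3 - 3x^2 + 2 has exactly one root α in the open interval (0,1), and f(x) < 0 for all x with α < x < 1. -/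
noncomputable def fpoly : ℝ → ℝ := fun x => x ^ 6 + 2 * x ^ 5 - 2 * x ^ 4 - 6 * x ^ 3 - 3 * x ^ 2 + 2

lemma fpoly_deriv (x : ℝ) : HasDerivAt fpoly (6*x^5 + 10*x^4 - 8*x^3 - 18*x^2 - 6*x) x := by
  have h : HasDerivAt (fun x : ℝ => x ^ 6 + 2 * x ^ 5 - 2 * x ^ 4 - 6 * x ^ 3 - 3 * x ^ 2 + 2)
      (6*x^5 + (2*(5*x^4)) - (2*(4*x^3)) - (6*(3*x^2)) - (3*(2*x^1)) + 0) x := by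
    exact ((((((hasDerivAt_pow 6 x).add ((hasDerivAt_pow 5 x).const_mul 2)).sub
      ((hasDerivAt_pow 4 x).const_mul 2)).sub ((hasDerivAt_pow 3 x).const_mul 6)).sub
      ((hasDerivAt_pow 2 x).const_mul 3)).add_const 2).congr_deriv (by ring_nf)
  exact h.congr_deriv (by ring)

lemma fpoly_anti : StrictAntiOn fpoly (Set.Icc 0 1) := by
  apply strictAntiOn_of_deriv_neg (convex_Icc 0 1)
  · exact Continuous.continuousOn (by unfold fpoly; continuity)
  · intro x hx
    rw [interior_Icc] at hx
    obtain ⟨h0, h1⟩ := hx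
    rw [(fpoly_deriv x).deriv]
    nlinarith [mul_pos h0 (sub_pos.2 h1), sq_nonneg x, mul_pos (mul_pos h0 h0) (sub_pos.2 h1),
      mul_pos (mul_pos (mul_pos h0 h0) h0) (sub_pos.2 h1),
      mul_pos (mul_pos (mul_pos (mul_pos h0 h0) h0) h0) (sub_pos.2 h1)]

/-- the polynomial `f(x) = x⁶ + 2x⁵ - 2x⁴ - 6x³ - 3x² + 2` has exactly one
root `α` in the open interval `(0,1)`, and `f(x) < 0` for all `x` with `α < x < 1`. -/
theorem poly_unique_root_and_neg :
    ∃ α ∈ Set.Ioo (0 : ℝ) 1,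
      (α ^ 6 + 2 * α ^ 5 - 2 * α ^ 4 - 6 * α ^ 3 - 3 * α ^ 2 + 2 = 0) ∧
      (∀ β ∈ Set.Ioo (0 : ℝ) 1,
        β ^ 6 + 2 * β ^ 5 - 2 * β ^ 4 - 6 * β ^ 3 - 3 * β ^ 2 + 2 = 0 → β = α) ∧
      (∀ x ∈ Set.Ioo α 1,
        x ^ 6 + 2 * x ^ 5 - 2 * x ^ 4 - 6 * x ^ 3 - 3 * x ^ 2 + 2 < 0) := by
  have hcont : ContinuousOn fpoly (Set.Icc (0:ℝ) 1) :=
    Continuous.continuousOn (by unfold fpoly; continuity)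
  have hmem : (0:ℝ) ∈ Set.Ioo (fpoly 1) (fpoly 0) := by
    constructor <;> norm_num [fpoly]
  obtain ⟨α, hα, hfα⟩ := intermediate_value_Ioo' (by norm_num) hcont hmem
  refine ⟨α, hα, by simpa [fpoly] using hfα, ?_, ?_⟩
  · intro β hβ hfβ
    have hβ' : fpoly β = 0 := by simpa [fpoly] using hfβ
    have hαI : α ∈ Set.Icc (0:ℝ) 1 := Set.Ioo_subset_Icc_self hα
    have hβI : β ∈ Set.Icc (0:ℝ) 1 := Set.Ioo_subset_Icc_self hβ
    by_contra hne
    rcases lt_or_gt_of_ne hne with h | h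
    · have := fpoly_anti hβI hαI h
      rw [hβ', hfα] at this; exact lt_irrefl 0 this
    · have := fpoly_anti hαI hβI h
      rw [hβ', hfα] at this; exact lt_irrefl 0 this
  · intro x hx
    have hxI : x ∈ Set.Icc (0:ℝ) 1 := ⟨le_of_lt (lt_trans hα.1 hx.1), le_of_lt hx.2⟩
    have := fpoly_anti (Set.Ioo_subset_Icc_self hα) hxI hx.1
    rw [hfα] at this
    simpa [fpoly] using this
end
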